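/- arXiv:0707.2159 — 2 statements merged into one kernel-verified Lean document; each statement's English description precedes it below -/
import Mathlib

section
/- The metric d₁ is compatible with the weak topology on probability measures on ℝ: (i) if μ is a finite nonnegative Borel measure on ℝ and (μⁿ) are probability measures with d₁(μⁿ,μ) → 0, then μⁿ converges weakly to μ and μ is a probability measure; (ii) conversely, if probability measures μₙ converge weakly to a probability measure μ, then d₁(μₙ,μ) → 0; (iii) moreover, any sequence of probability measures on ℝ that is Cauchy for d₁ converges weakly to some probability measure. -/
open MeasureTheory Filter Topology
open scoped ENNReal NNReal BoundedContinuousFunction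

noncomputable section

/-- `f` is Lipschitz-plus-sup-norm bounded by one:
`sup_{x≠y} |f x − f y|/|x−y| + sup_x |f x| ≤ 1`, expressed by a decomposition of the
bound `1 = K + M` into a Lipschitz constant `K` and a uniform bound `M`. -/
def LipNormLEOne (f : ℝ → ℝ) : Prop :=
  ∃ K M : ℝ, 0 ≤ K ∧ 0 ≤ M ∧ K + M ≤ 1 ∧
    LipschitzWith K.toNNReal f ∧ ∀ t : ℝ, |f t| ≤ M

/-- The modified Dudley distance `d₁`: the supremum of `|∫ f dμ − ∫ f dν|` over
non-decreasing Lipschitz functions `f` with `‖f‖_L ≤ 1`. -/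
def d1 (μ ν : Measure ℝ) : ℝ :=
  sSup {r : ℝ | ∃ f : ℝ → ℝ, Monotone f ∧ LipNormLEOne f ∧
    r = |(∫ t, f t ∂μ) - ∫ t, f t ∂ν|}


/-!
Rescaled ramps `t ↦ max 0 (min 1 ((t - a) / δ))` are admissible test functions for `d₁` up to the
factor `δ⁻¹ + 1`, and they are squeezed between the indicators of `(a + δ, ∞)` and `(a, ∞)`.
Hence `d₁` controls distribution functions: `F_ν(a) ≤ F_μ(a + δ) + (δ⁻¹ + 1) d₁(μ, ν)`.

(i) If `d₁(μⁿ, μ) → 0`, testing against the constant `1` gives `μ(ℝ) = 1`, and the CDF bound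
gives `F_{μⁿ}(x) → F_μ(x)` at every continuity point `x` of `F_μ`. Intervals `(a, b]` with
continuity endpoints form a π-system containing arbitrarily small neighbourhoods of each point,
so this already implies weak convergence.

(ii) Comparing layer-cake representations shows `|∫ f dμ - ∫ f dν| ≤ (K + 2M) ε` whenever the
Lévy–Prokhorov distance is `< ε` and `f` is `K`-Lipschitz with `|f| ≤ M`; thus `d₁ ≤ 2 d_LP`,
and `d_LP` metrizes weak convergence on the separable space `ℝ`.

(iii) The CDF bound makes the tails of a `d₁`-Cauchy sequence uniformly small, so the sequence is
tight. By Prokhorov's theorem a subsequence converges weakly, hence in `d₁` by (ii); a Cauchy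
sequence with a convergent subsequence converges, and (i) turns this back into weak convergence.
-/

open Set ProbabilityTheory

namespace LipNormLEOne

variable {f : ℝ → ℝ}

lemma abs_le_one (hf : LipNormLEOne f) (t : ℝ) : |f t| ≤ 1 := by
  obtain ⟨K, M, hK, -, hKM, -, hb⟩ := hf
  linarith [hb t]

lemma continuous (hf : LipNormLEOne f) : Continuous f := by
  obtain ⟨K, M, -, -, -, hl, -⟩ := hf
  exact hl.continuous

lemma integrable (hf : LipNormLEOne f) (μ : Measure ℝ) [IsFiniteMeasure μ] : Integrable f μ :=
  (integrable_const 1).mono' hf.continuous.aestronglyMeasurable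
    (ae_of_all _ fun t => (Real.norm_eq_abs _).trans_le (hf.abs_le_one t))

end LipNormLEOne

lemma lipNormLEOne_const {c : ℝ} (hc : |c| ≤ 1) : LipNormLEOne fun _ => c :=
  ⟨0, |c|, le_rfl, abs_nonneg c, by linarith, by simp, fun _ => le_rfl⟩

section D1

variable {μ ν κ : Measure ℝ}

lemma bddAbove_d1_set (μ ν : Measure ℝ) [IsFiniteMeasure μ] [IsFiniteMeasure ν] :
    BddAbove {r : ℝ | ∃ f : ℝ → ℝ, Monotone f ∧ LipNormLEOne f ∧
      r = |(∫ t, f t ∂μ) - ∫ t, f t ∂ν|} := by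
  refine ⟨μ.real univ + ν.real univ, ?_⟩
  rintro r ⟨f, -, hf, rfl⟩
  have bound (ρ : Measure ℝ) [IsFiniteMeasure ρ] : |∫ t, f t ∂ρ| ≤ ρ.real univ := by
    simpa using norm_integral_le_of_norm_le_const (μ := ρ)
      (ae_of_all _ fun t => (Real.norm_eq_abs _).trans_le (hf.abs_le_one t))
  linarith [abs_sub (∫ t, f t ∂μ) (∫ t, f t ∂ν), bound μ, bound ν]

lemma abs_integral_sub_le_d1 [IsFiniteMeasure μ] [IsFiniteMeasure ν] {f : ℝ → ℝ}
    (hmono : Monotone f) (hf : LipNormLEOne f) :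
    |(∫ t, f t ∂μ) - ∫ t, f t ∂ν| ≤ d1 μ ν :=
  le_csSup (bddAbove_d1_set μ ν) ⟨f, hmono, hf, rfl⟩

lemma d1_le_of_forall_le {c : ℝ}
    (h : ∀ f : ℝ → ℝ, Monotone f → LipNormLEOne f → |(∫ t, f t ∂μ) - ∫ t, f t ∂ν| ≤ c) :
    d1 μ ν ≤ c :=
  csSup_le ⟨_, fun _ => 0, monotone_const, lipNormLEOne_const (c := 0) (by simp), rfl⟩
    (by rintro r ⟨f, hmono, hf, rfl⟩; exact h f hmono hf)

lemma d1_nonneg (μ ν : Measure ℝ) [IsFiniteMeasure μ] [IsFiniteMeasure ν] : 0 ≤ d1 μ ν := by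
  simpa using abs_integral_sub_le_d1 (μ := μ) (ν := ν) monotone_const
    (lipNormLEOne_const (c := 0) (by simp))

lemma d1_comm (μ ν : Measure ℝ) : d1 μ ν = d1 ν μ := by
  unfold d1
  congr 1
  ext r
  refine exists_congr fun f => and_congr_right' (and_congr_right' ?_)
  rw [abs_sub_comm]

lemma d1_triangle [IsFiniteMeasure μ] [IsFiniteMeasure ν] [IsFiniteMeasure κ] :
    d1 μ κ ≤ d1 μ ν + d1 ν κ :=
  d1_le_of_forall_le fun _ hmono hf => (abs_sub_le _ _ _).trans
    (add_le_add (abs_integral_sub_le_d1 hmono hf) (abs_integral_sub_le_d1 hmono hf))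

lemma abs_integral_sub_le_mul_d1 [IsFiniteMeasure μ] [IsFiniteMeasure ν] {f : ℝ → ℝ}
    (hmono : Monotone f) {K M : ℝ} (hK : 0 ≤ K) (hM : 0 ≤ M)
    (hlip : LipschitzWith K.toNNReal f) (hb : ∀ t, |f t| ≤ M) :
    |(∫ t, f t ∂μ) - ∫ t, f t ∂ν| ≤ (K + M) * d1 μ ν := by
  rcases (add_nonneg hK hM).eq_or_lt with hKM | hKM
  · have hf : f = 0 := funext fun t => abs_nonpos_iff.mp (by linarith [hb t])
    simp [hf, ← hKM]
  set c := K + M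
  have hscaled : LipNormLEOne fun t => c⁻¹ * f t := by
    refine ⟨c⁻¹ * K, c⁻¹ * M, by positivity, by positivity,
      by rw [← mul_add, inv_mul_cancel₀ hKM.ne'], ?_, fun t => ?_⟩
    · refine LipschitzWith.of_dist_le_mul fun x y => ?_
      have hxy := hlip.dist_le_mul x y
      rw [Real.coe_toNNReal _ hK] at hxy
      rw [Real.coe_toNNReal _ (by positivity), Real.dist_eq, ← mul_sub, abs_mul,
        abs_of_pos (inv_pos.2 hKM), mul_assoc, ← Real.dist_eq]
      exact mul_le_mul_of_nonneg_left hxy (inv_pos.2 hKM).le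
    · rw [abs_mul, abs_of_pos (inv_pos.2 hKM)]
      exact mul_le_mul_of_nonneg_left (hb t) (by positivity)
  have := abs_integral_sub_le_d1 (μ := μ) (ν := ν)
    (fun x y hxy => mul_le_mul_of_nonneg_left (hmono hxy) (inv_pos.2 hKM).le) hscaled
  rwa [integral_const_mul, integral_const_mul, ← mul_sub, abs_mul, abs_of_pos (inv_pos.2 hKM),
    inv_mul_le_iff₀ hKM] at this

end D1

section Ramp

def ramp (a δ t : ℝ) : ℝ := max 0 (min 1 ((t - a) / δ))

variable {a δ : ℝ}

lemma ramp_nonneg (t : ℝ) : 0 ≤ ramp a δ t := le_max_left _ _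

lemma ramp_le_one (t : ℝ) : ramp a δ t ≤ 1 := max_le zero_le_one (min_le_left _ _)

lemma monotone_ramp (hδ : 0 < δ) : Monotone (ramp a δ) := fun _ _ hst =>
  max_le_max le_rfl (min_le_min le_rfl (div_le_div_of_nonneg_right (by linarith) hδ.le))

lemma lipschitzWith_ramp (hδ : 0 < δ) : LipschitzWith δ⁻¹.toNNReal (ramp a δ) := by
  have affine : LipschitzWith δ⁻¹.toNNReal fun t : ℝ => (t - a) / δ :=
    LipschitzWith.of_dist_le_mul fun s t => by
      rw [Real.coe_toNNReal _ (by positivity), Real.dist_eq, Real.dist_eq, ← sub_div,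
        sub_sub_sub_cancel_right, abs_div, abs_of_pos hδ, div_eq_inv_mul]
  exact (affine.const_min 1).const_max 0

lemma ramp_eq_zero (hδ : 0 < δ) {t : ℝ} (ht : t ≤ a) : ramp a δ t = 0 :=
  max_eq_left ((min_le_right _ _).trans (div_nonpos_of_nonpos_of_nonneg (by linarith) hδ.le))

lemma ramp_eq_one (hδ : 0 < δ) {t : ℝ} (ht : a + δ ≤ t) : ramp a δ t = 1 := by
  rw [ramp, min_eq_left ((one_le_div hδ).2 (by linarith)), max_eq_right zero_le_one]

lemma indicator_Ioi_le_ramp (hδ : 0 < δ) (t : ℝ) : (Ioi (a + δ)).indicator 1 t ≤ ramp a δ t := by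
  by_cases ht : t ∈ Ioi (a + δ)
  · rw [indicator_of_mem ht, ramp_eq_one hδ (le_of_lt ht), Pi.one_apply]
  · rw [indicator_of_notMem ht]
    exact ramp_nonneg t

lemma ramp_le_indicator_Ioi (hδ : 0 < δ) (t : ℝ) : ramp a δ t ≤ (Ioi a).indicator 1 t := by
  by_cases ht : t ∈ Ioi a
  · rw [indicator_of_mem ht, Pi.one_apply]
    exact ramp_le_one t
  · rw [indicator_of_notMem ht, ramp_eq_zero hδ (not_lt.1 ht)]

lemma integrable_ramp (μ : Measure ℝ) [IsFiniteMeasure μ] : Integrable (ramp a δ) μ :=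
  (integrable_const 1).mono' (by unfold ramp; fun_prop : Measurable (ramp a δ)).aestronglyMeasurable
    (ae_of_all _ fun t => by
      rw [Real.norm_eq_abs, abs_of_nonneg (ramp_nonneg t)]; exact ramp_le_one t)

variable (μ ν : Measure ℝ) [IsProbabilityMeasure μ] [IsProbabilityMeasure ν]

lemma integral_indicator_one_Ioi (x : ℝ) : ∫ t, (Ioi x).indicator 1 t ∂μ = 1 - cdf μ x := by
  rw [integral_indicator_one measurableSet_Ioi, ← compl_Iic,
    probReal_compl_eq_one_sub measurableSet_Iic, cdf_eq_real]

lemma one_sub_cdf_add_le_integral_ramp (hδ : 0 < δ) :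
    1 - cdf μ (a + δ) ≤ ∫ t, ramp a δ t ∂μ := by
  rw [← integral_indicator_one_Ioi]
  exact integral_mono ((integrable_const 1).indicator measurableSet_Ioi) (integrable_ramp μ)
    (indicator_Ioi_le_ramp hδ)

lemma integral_ramp_le_one_sub_cdf (hδ : 0 < δ) :
    ∫ t, ramp a δ t ∂μ ≤ 1 - cdf μ a := by
  rw [← integral_indicator_one_Ioi]
  exact integral_mono (integrable_ramp μ) ((integrable_const 1).indicator measurableSet_Ioi)
    (ramp_le_indicator_Ioi hδ)

lemma cdf_le_cdf_add_d1 (hδ : 0 < δ) : cdf ν a ≤ cdf μ (a + δ) + (δ⁻¹ + 1) * d1 μ ν := by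
  have hd1 := abs_integral_sub_le_mul_d1 (μ := μ) (ν := ν) (monotone_ramp (a := a) hδ)
    (inv_pos.2 hδ).le zero_le_one (lipschitzWith_ramp hδ)
    (fun t => (abs_of_nonneg (ramp_nonneg t)).trans_le (ramp_le_one t))
  linarith [(abs_le.1 hd1).2, one_sub_cdf_add_le_integral_ramp μ (a := a) hδ,
    integral_ramp_le_one_sub_cdf ν (a := a) hδ]

end Ramp

lemma measureReal_Ioc_eq_cdf_sub (μ : Measure ℝ) [IsProbabilityMeasure μ] {a b : ℝ} (hab : a ≤ b) :
    μ.real (Ioc a b) = cdf μ b - cdf μ a := by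
  rw [← Iic_sdiff_Iic, measureReal_sdiff (Iic_subset_Iic.2 hab) measurableSet_Iic, cdf_eq_real,
    cdf_eq_real]

lemma MeasureTheory.ProbabilityMeasure.tendsto_of_tendsto_cdf {ι : Type*} {l : Filter ι}
    [l.IsCountablyGenerated] {μs : ι → ProbabilityMeasure ℝ} {μ : ProbabilityMeasure ℝ}
    (h : ∀ x, ContinuousAt (cdf μ) x → Tendsto (fun i => cdf (μs i) x) l (𝓝 (cdf μ x))) :
    Tendsto μs l (𝓝 μ) := by
  set C := {x | ContinuousAt (cdf (μ : Measure ℝ)) x}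
  have hC : Dense C := by
    simpa [C, compl_ofPred] using ((cdf μ).mono.countable_not_continuousAt).dense_compl ℝ
  refine (isPiSystem_Ioc_mem C C).tendsto_probabilityMeasure_of_tendsto_of_mem ?_ ?_ ?_
  · rintro _ ⟨a, -, b, -, -, rfl⟩
    exact measurableSet_Ioc
  · intro u hu x hx
    obtain ⟨ε, hε, hball⟩ := Metric.isOpen_iff.1 hu x hx
    obtain ⟨a, haC, ha⟩ := hC.exists_between (sub_lt_self x hε)
    obtain ⟨b, hbC, hb⟩ := hC.exists_between (lt_add_of_pos_right x hε)
    refine ⟨Ioc a b, ⟨a, haC, b, hbC, ha.2.trans hb.1, rfl⟩, Ioc_mem_nhds ha.2 hb.1,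
      fun y hy => hball ?_⟩
    rw [Real.ball_eq_Ioo]
    exact ⟨ha.1.trans hy.1, hy.2.trans_lt hb.2⟩
  · rintro _ ⟨a, ha, b, hb, hab, rfl⟩
    rw [← NNReal.tendsto_coe]
    simp_rw [← ProbabilityMeasure.measureReal_eq_coe_coeFn, measureReal_Ioc_eq_cdf_sub _ hab.le]
    exact (h b hb).sub (h a ha)

section WeakOfD1

variable {μ : Measure ℝ} {μs : ℕ → Measure ℝ} [∀ n, IsProbabilityMeasure (μs n)]

lemma isProbabilityMeasure_of_tendsto_d1 [IsFiniteMeasure μ]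
    (hd : Tendsto (fun n => d1 (μs n) μ) atTop (𝓝 0)) : IsProbabilityMeasure μ := by
  have hmass : ∀ n, |1 - μ.real univ| ≤ d1 (μs n) μ := fun n => by
    simpa using abs_integral_sub_le_d1 (μ := μs n) (ν := μ) monotone_const
      (lipNormLEOne_const (c := 1) (by simp))
  have := ge_of_tendsto hd (Eventually.of_forall hmass)
  exact isProbabilityMeasure_iff_real.2 (by linarith [abs_nonneg (1 - μ.real univ), abs_le.1 this])

lemma tendsto_cdf_of_tendsto_d1 [IsProbabilityMeasure μ]
    (hd : Tendsto (fun n => d1 (μs n) μ) atTop (𝓝 0)) {x : ℝ} (hx : ContinuousAt (cdf μ) x) :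
    Tendsto (fun n => cdf (μs n) x) atTop (𝓝 (cdf μ x)) := by
  rw [Metric.tendsto_atTop]
  intro ε hε
  obtain ⟨δ, hδ, hcont⟩ := Metric.continuousAt_iff.1 hx (ε / 2) (half_pos hε)
  have hδ2 : 0 < δ / 2 := half_pos hδ
  have hsmall : Tendsto (fun n => ((δ / 2)⁻¹ + 1) * d1 (μs n) μ) atTop (𝓝 0) := by
    simpa using hd.const_mul ((δ / 2)⁻¹ + 1)
  obtain ⟨N, hN⟩ := eventually_atTop.1 (hsmall.eventually (gt_mem_nhds (half_pos hε)))
  refine ⟨N, fun n hn => ?_⟩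
  have lower := cdf_le_cdf_add_d1 (μs n) μ (a := x - δ / 2) hδ2
  have upper := cdf_le_cdf_add_d1 μ (μs n) (a := x) hδ2
  rw [sub_add_cancel] at lower
  rw [d1_comm] at upper
  have hleft := hcont (x := x - δ / 2) (by rw [Real.dist_eq, abs_of_neg] <;> linarith)
  have hright := hcont (x := x + δ / 2) (by rw [Real.dist_eq, abs_of_pos] <;> linarith)
  rw [Real.dist_eq, abs_lt] at hleft hright ⊢
  have := hN n hn
  constructor <;> linarith

theorem tendsto_integral_of_tendsto_d1 [IsFiniteMeasure μ]
    (hd : Tendsto (fun n => d1 (μs n) μ) atTop (𝓝 0)) :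
    (∀ f : ℝ →ᵇ ℝ, Tendsto (fun n => ∫ t, f t ∂(μs n)) atTop (𝓝 (∫ t, f t ∂μ))) ∧
      IsProbabilityMeasure μ := by
  have hμ := isProbabilityMeasure_of_tendsto_d1 hd
  have hweak := ProbabilityMeasure.tendsto_of_tendsto_cdf
    (μs := fun n => ⟨μs n, inferInstance⟩) (μ := ⟨μ, hμ⟩)
    fun x hx => tendsto_cdf_of_tendsto_d1 hd hx
  exact ⟨ProbabilityMeasure.tendsto_iff_forall_integral_tendsto.1 hweak, hμ⟩

end WeakOfD1

section LevyProkhorov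

open BoundedContinuousFunction Metric

variable {Ω : Type*} [MeasurableSpace Ω] [PseudoMetricSpace Ω] [OpensMeasurableSpace Ω]

lemma BoundedContinuousFunction.integral_le_integral_add_of_levyProkhorovEDist_lt
    (μ ν : Measure Ω) [IsFiniteMeasure μ] [IsFiniteMeasure ν] {ε : ℝ} (hε : 0 < ε)
    (hμν : levyProkhorovEDist μ ν < ENNReal.ofReal ε) (f : Ω →ᵇ ℝ) (hf_nn : 0 ≤ f) {K : ℝ≥0}
    (hf : LipschitzWith K f) :
    ∫ ω, f ω ∂μ ≤ ∫ ω, f ω ∂ν + K * ε * ν.real univ + ε * ‖f‖ := by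
  set g : Ω →ᵇ ℝ := f + const Ω (K * ε)
  have hfg_le (x : Ω) : f x ≤ g x :=
    show f x ≤ f x + K * ε from le_add_of_nonneg_right (by positivity)
  have hg_nn : 0 ≤ g := fun x => (hf_nn x).trans (hfg_le x)
  have hfg : ‖f‖ ≤ ‖g‖ := (norm_le (norm_nonneg _)).2 fun x =>
    calc ‖f x‖ = f x := Real.norm_of_nonneg (hf_nn x)
      _ ≤ g x := hfg_le x
      _ ≤ ‖g‖ := (le_abs_self _).trans (g.norm_coe_le_norm x)
  have hthick (t : ℝ) : thickening ε {a | t ≤ f a} ⊆ {a | t ≤ g a} := fun y hy => by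
    obtain ⟨x, hx, hxy⟩ := mem_thickening_iff.1 hy
    have hlip := (abs_sub_le_iff.1 (hf.dist_le_mul x y)).1
    have hKε := mul_le_mul_of_nonneg_left hxy.le K.coe_nonneg
    rw [dist_comm] at hlip
    show t ≤ f y + K * ε
    linarith [show t ≤ f x from hx]
  have hint : IntegrableOn (fun t => ν.real {a | t ≤ g a}) (Ioc 0 ‖g‖) := by
    refine (intervalIntegrable_iff_integrableOn_Ioc_of_le (norm_nonneg g)).1
      (Antitone.intervalIntegrable fun s t hst => measureReal_mono fun a ha => ?_)
    exact hst.trans ha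
  calc ∫ ω, f ω ∂μ
      ≤ (∫ t in Ioc 0 ‖f‖, ν.real (thickening ε {a | t ≤ f a})) + ε * ‖f‖ :=
        f.integral_le_of_levyProkhorovEDist_lt μ ν hε hμν (ae_of_all _ hf_nn)
    _ ≤ (∫ t in Ioc 0 ‖g‖, ν.real {a | t ≤ g a}) + ε * ‖f‖ := by
        gcongr 1
        refine (integral_mono_of_nonneg (ae_of_all _ fun t => measureReal_nonneg)
          (hint.mono_set (Ioc_subset_Ioc_right hfg)) (ae_of_all _ fun t =>
            measureReal_mono (hthick t))).trans ?_
        exact setIntegral_mono_set hint (ae_of_all _ fun t => measureReal_nonneg)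
          (Ioc_subset_Ioc_right hfg).eventuallyLE
    _ = ∫ ω, f ω ∂ν + K * ε * ν.real univ + ε * ‖f‖ := by
        rw [← g.integral_eq_integral_meas_le ν (ae_of_all _ hg_nn)]
        simp [g, integral_add (f.integrable ν) (integrable_const _), mul_comm]

end LevyProkhorov

section D1OfWeak

lemma LipNormLEOne.integral_sub_le_of_levyProkhorovEDist_lt {f : ℝ → ℝ} (hf : LipNormLEOne f)
    (μ ν : Measure ℝ) [IsProbabilityMeasure μ] [IsProbabilityMeasure ν] {ε : ℝ} (hε : 0 < ε)
    (hμν : levyProkhorovEDist μ ν < ENNReal.ofReal ε) :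
    ∫ t, f t ∂μ - ∫ t, f t ∂ν ≤ 2 * ε := by
  have hfi := hf.integrable
  obtain ⟨K, M, hK, hM, hKM, hlip, hb⟩ := hf
  have hshift (t : ℝ) : 0 ≤ f t + M ∧ f t + M ≤ 2 * M := by
    constructor <;> linarith [abs_le.1 (hb t)]
  set g := BoundedContinuousFunction.ofNormedAddCommGroup (fun t => f t + M)
    (hlip.continuous.add continuous_const) (2 * M) fun t => by
      rw [Real.norm_eq_abs, abs_of_nonneg (hshift t).1]; exact (hshift t).2
  have hg_lip : LipschitzWith K.toNNReal g := fun x y => by simpa [g] using hlip x y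
  have key := g.integral_le_integral_add_of_levyProkhorovEDist_lt μ ν hε hμν
    (fun t => (hshift t).1) hg_lip
  have hnorm : ‖g‖ ≤ 2 * M :=
    BoundedContinuousFunction.norm_ofNormedAddCommGroup_le _ (by positivity) _
  have hint (ρ : Measure ℝ) [IsProbabilityMeasure ρ] : ∫ t, g t ∂ρ = ∫ t, f t ∂ρ + M := by
    simp [g, integral_add (hfi ρ) (integrable_const M)]
  rw [hint, hint, probReal_univ, Real.coe_toNNReal _ hK] at key
  nlinarith [mul_le_mul_of_nonneg_left hnorm hε.le]

lemma d1_le_two_mul_levyProkhorovDist (μ ν : Measure ℝ) [IsProbabilityMeasure μ]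
    [IsProbabilityMeasure ν] : d1 μ ν ≤ 2 * levyProkhorovDist μ ν := by
  refine d1_le_of_forall_le fun f _ hf => ?_
  have hclose (ε : ℝ) (hε : levyProkhorovDist μ ν < ε) :
      |(∫ t, f t ∂μ) - ∫ t, f t ∂ν| ≤ 2 * ε := by
    have hε0 : 0 < ε := ENNReal.toReal_nonneg.trans_lt hε
    have hlt := (ENNReal.lt_ofReal_iff_toReal_lt (levyProkhorovEDist_ne_top μ ν)).2 hε
    refine abs_sub_le_iff.2 ⟨hf.integral_sub_le_of_levyProkhorovEDist_lt μ ν hε0 hlt,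
      hf.integral_sub_le_of_levyProkhorovEDist_lt ν μ hε0 ?_⟩
    rwa [levyProkhorovEDist_comm]
  refine le_of_forall_pos_le_add fun η hη => ?_
  linarith [hclose (levyProkhorovDist μ ν + η / 2) (by linarith)]

theorem tendsto_d1_of_tendsto_integral {μ : Measure ℝ} [IsProbabilityMeasure μ]
    {μs : ℕ → Measure ℝ} [∀ n, IsProbabilityMeasure (μs n)]
    (hw : ∀ f : ℝ →ᵇ ℝ, Tendsto (fun n => ∫ t, f t ∂(μs n)) atTop (𝓝 (∫ t, f t ∂μ))) :
    Tendsto (fun n => d1 (μs n) μ) atTop (𝓝 0) := by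
  have hweak := (ProbabilityMeasure.tendsto_iff_forall_integral_tendsto
    (μs := fun n => ⟨μs n, inferInstance⟩) (μ := ⟨μ, inferInstance⟩)).2 hw
  have hLP := tendsto_iff_dist_tendsto_zero.1
    ((LevyProkhorov.continuous_ofMeasure_probabilityMeasure.tendsto _).comp hweak)
  refine squeeze_zero (fun n => d1_nonneg _ _) (fun n => d1_le_two_mul_levyProkhorovDist _ _) ?_
  exact mul_zero (2 : ℝ) ▸ hLP.const_mul 2

end D1OfWeak

section Cauchy

lemma tendsto_cdf_tails (μ : Measure ℝ) :
    Tendsto (fun r => cdf μ (-r) + (1 - cdf μ r)) atTop (𝓝 0) := by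
  simpa using ((tendsto_cdf_atBot μ).comp tendsto_neg_atTop_atBot).add
    ((tendsto_cdf_atTop μ).const_sub 1)

lemma cdf_tails_le_cdf_tails_add_d1 (μ ν : Measure ℝ) [IsProbabilityMeasure μ]
    [IsProbabilityMeasure ν] (r : ℝ) :
    cdf ν (-r) + (1 - cdf ν r) ≤ cdf μ (-(r - 1)) + (1 - cdf μ (r - 1)) + 4 * d1 μ ν := by
  have hleft := cdf_le_cdf_add_d1 μ ν (a := -r) one_pos
  have hright := cdf_le_cdf_add_d1 ν μ (a := r - 1) one_pos
  rw [d1_comm ν μ, sub_add_cancel] at hright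
  rw [neg_add_eq_sub] at hleft
  rw [neg_sub]
  norm_num at hleft hright
  linarith

lemma isTightMeasureSet_range_of_cdf_tails {μs : ℕ → Measure ℝ}
    [∀ n, IsProbabilityMeasure (μs n)]
    (h : ∀ ε > 0, ∃ r, ∀ n, cdf (μs n) (-r) + (1 - cdf (μs n) r) ≤ ε) :
    IsTightMeasureSet (range μs) := by
  rw [isTightMeasureSet_iff_exists_isCompact_measure_compl_le]
  intro ε hε
  obtain ⟨η, -, hη, hηε⟩ := ENNReal.lt_iff_exists_real_btwn.1 hε
  obtain ⟨r, hr⟩ := h η (ENNReal.ofReal_pos.1 hη)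
  refine ⟨Icc (-r) r, isCompact_Icc, ?_⟩
  rintro _ ⟨n, rfl⟩
  have hcover : (Icc (-r) r)ᶜ ⊆ Iic (-r) ∪ (Iic r)ᶜ := fun x hx => by
    simp only [mem_compl_iff, mem_Icc, not_and_or, not_le] at hx
    rcases hx with hx | hx
    exacts [Or.inl hx.le, Or.inr (not_le.2 hx)]
  have hreal : (μs n).real (Icc (-r) r)ᶜ ≤ η := by
    refine ((measureReal_mono hcover).trans (measureReal_union_le _ _)).trans ?_
    rw [probReal_compl_eq_one_sub measurableSet_Iic, ← cdf_eq_real, ← cdf_eq_real]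
    exact hr n
  rw [← ofReal_measureReal]
  exact (ENNReal.ofReal_le_ofReal hreal).trans hηε.le

lemma exists_cdf_tails_le_of_cauchy_d1 {μs : ℕ → Measure ℝ} [∀ n, IsProbabilityMeasure (μs n)]
    (hc : ∀ ε > (0 : ℝ), ∃ N : ℕ, ∀ m ≥ N, ∀ n ≥ N, d1 (μs m) (μs n) < ε) :
    ∀ ε > 0, ∃ r, ∀ n, cdf (μs n) (-r) + (1 - cdf (μs n) r) ≤ ε := by
  intro ε hε
  obtain ⟨N, hN⟩ := hc (ε / 8) (by positivity)
  have hfirst : ∀ᶠ r in atTop, ∀ n ∈ Finset.range N, cdf (μs n) (-r) + (1 - cdf (μs n) r) ≤ ε :=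
    (Finset.range N).eventually_all.2 fun n _ =>
      (tendsto_cdf_tails (μs n)).eventually (ge_mem_nhds hε)
  have hlast : ∀ᶠ r in atTop, cdf (μs N) (-(r - 1)) + (1 - cdf (μs N) (r - 1)) ≤ ε / 2 := by
    have := (tendsto_cdf_tails (μs N)).comp (tendsto_atTop_add_const_right atTop (-1) tendsto_id)
    simpa [← sub_eq_add_neg] using this.eventually (ge_mem_nhds (half_pos hε))
  obtain ⟨r, hr_first, hr_last⟩ := (hfirst.and hlast).exists
  refine ⟨r, fun n => ?_⟩
  rcases lt_or_ge n N with hn | hn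
  · exact hr_first n (Finset.mem_range.2 hn)
  · linarith [cdf_tails_le_cdf_tails_add_d1 (μs N) (μs n) r, hN N le_rfl n hn]

lemma tendsto_d1_of_cauchy_of_tendsto_subseq {μs : ℕ → Measure ℝ} {μ : Measure ℝ}
    [∀ n, IsFiniteMeasure (μs n)] [IsFiniteMeasure μ]
    (hc : ∀ ε > (0 : ℝ), ∃ N : ℕ, ∀ m ≥ N, ∀ n ≥ N, d1 (μs m) (μs n) < ε)
    {φ : ℕ → ℕ} (hφ : StrictMono φ) (hsub : Tendsto (fun k => d1 (μs (φ k)) μ) atTop (𝓝 0)) :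
    Tendsto (fun n => d1 (μs n) μ) atTop (𝓝 0) := by
  rw [Metric.tendsto_atTop]
  intro ε hε
  obtain ⟨N, hN⟩ := hc (ε / 2) (half_pos hε)
  obtain ⟨k, hk, hkN⟩ :=
    ((hsub.eventually (gt_mem_nhds (half_pos hε))).and (eventually_ge_atTop N)).exists
  refine ⟨N, fun n hn => ?_⟩
  rw [Real.dist_eq, sub_zero, abs_of_nonneg (d1_nonneg _ _)]
  linarith [d1_triangle (μ := μs n) (ν := μs (φ k)) (κ := μ),
    hN n hn (φ k) (hkN.trans (hφ.id_le k))]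

theorem exists_tendsto_integral_of_cauchy_d1 {μs : ℕ → Measure ℝ}
    [∀ n, IsProbabilityMeasure (μs n)]
    (hc : ∀ ε > (0 : ℝ), ∃ N : ℕ, ∀ m ≥ N, ∀ n ≥ N, d1 (μs m) (μs n) < ε) :
    ∃ μ : Measure ℝ, IsProbabilityMeasure μ ∧
      ∀ f : ℝ →ᵇ ℝ, Tendsto (fun n => ∫ t, f t ∂(μs n)) atTop (𝓝 (∫ t, f t ∂μ)) := by
  set P : ℕ → ProbabilityMeasure ℝ := fun n => ⟨μs n, inferInstance⟩
  have htight : IsTightMeasureSet (((↑) : ProbabilityMeasure ℝ → Measure ℝ) '' range P) := by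
    rw [← range_comp]
    exact isTightMeasureSet_range_of_cdf_tails (μs := μs) (exists_cdf_tails_le_of_cauchy_d1 hc)
  obtain ⟨ν, -, φ, hφ, hlim⟩ := (isCompact_closure_of_isTightMeasureSet htight).tendsto_subseq
    fun n => subset_closure (mem_range_self n)
  have hsub := tendsto_d1_of_tendsto_integral (μs := fun k => μs (φ k))
    (ProbabilityMeasure.tendsto_iff_forall_integral_tendsto.1 hlim)
  exact ⟨ν, inferInstance,
    (tendsto_integral_of_tendsto_d1 (tendsto_d1_of_cauchy_of_tendsto_subseq hc hφ hsub)).1⟩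

end Cauchy

/-- **Lemma 2.1**: the distance `d₁` is compatible with the weak topology on
probability measures on `ℝ`:
(i) if `d₁(μⁿ, μ) → 0` with `μⁿ` probability measures and `μ` a finite measure, then
`μⁿ → μ` weakly and `μ` is a probability measure;
(ii) if `μₙ → μ` weakly (all probability measures), then `d₁(μₙ, μ) → 0`;
(iii) any `d₁`-Cauchy sequence of probability measures converges weakly. -/
theorem d1_compatible_with_weak_topology :
    (∀ (μ : Measure ℝ) (μn : ℕ → Measure ℝ), IsFiniteMeasure μ →
      (∀ n, IsProbabilityMeasure (μn n)) →
      Tendsto (fun n => d1 (μn n) μ) atTop (𝓝 0) →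
      ((∀ f : ℝ →ᵇ ℝ, Tendsto (fun n => ∫ t, f t ∂(μn n)) atTop (𝓝 (∫ t, f t ∂μ))) ∧
        IsProbabilityMeasure μ)) ∧
    (∀ (μ : Measure ℝ) (μn : ℕ → Measure ℝ), IsProbabilityMeasure μ →
      (∀ n, IsProbabilityMeasure (μn n)) →
      (∀ f : ℝ →ᵇ ℝ, Tendsto (fun n => ∫ t, f t ∂(μn n)) atTop (𝓝 (∫ t, f t ∂μ))) →
      Tendsto (fun n => d1 (μn n) μ) atTop (𝓝 0)) ∧
    (∀ μn : ℕ → Measure ℝ, (∀ n, IsProbabilityMeasure (μn n)) →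
      (∀ ε > (0 : ℝ), ∃ N : ℕ, ∀ m ≥ N, ∀ n ≥ N, d1 (μn m) (μn n) < ε) →
      ∃ μ : Measure ℝ, IsProbabilityMeasure μ ∧
        ∀ f : ℝ →ᵇ ℝ, Tendsto (fun n => ∫ t, f t ∂(μn n)) atTop (𝓝 (∫ t, f t ∂μ))) :=
  ⟨fun _ _ _ _ hd => tendsto_integral_of_tendsto_d1 hd,
    fun _ _ _ _ hw => tendsto_d1_of_tendsto_integral hw,
    fun _ _ hc => exists_tendsto_integral_of_cauchy_d1 hc⟩
end
end

section
/- For every ε > 0 there exists B(ε) < ∞ such that for every B > B(ε) there exists δ(ε,B) > 0 with the following property: for all sufficiently large N, ℙ( d₁(μ̂_{A_N}, μ̂_{A_N^B}) > ε ) ≤ e^{−δ(ε,B) N}. -/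
open MeasureTheory ProbabilityTheory Filter Topology Matrix
open scoped ENNReal NNReal BoundedContinuousFunction

noncomputable section

/-- The `N × N` real symmetric matrix built from the upper-triangular array
`(x i j)_{1 ≤ i ≤ j}`, evaluated at the sample point `ω`. -/
def symMat {Ω : Type} (x : ℕ → ℕ → Ω → ℝ) (ω : Ω) (N : ℕ) :
    Matrix (Fin N) (Fin N) ℝ :=
  Matrix.of fun i j => x (min (i.1 + 1) (j.1 + 1)) (max (i.1 + 1) (j.1 + 1)) ω

/-- The eigenvalues of a real symmetric matrix (junk value `0` if not symmetric). -/
def evs {N : ℕ} (M : Matrix (Fin N) (Fin N) ℝ) : Fin N → ℝ :=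
  letI := Classical.propDecidable
  if h : M.IsHermitian then h.eigenvalues else 0

/-- The tail probability `ℙ(|v| ≥ u)`. -/
def tailP {Ω : Type} [MeasureSpace Ω] (v : Ω → ℝ) (u : ℝ) : ℝ :=
  (ℙ {ω | u ≤ |v ω|}).toReal

/-- The normalizing constant `a_N = inf {u > 0 : ℙ(|v| ≥ u) ≤ 1/N}`. -/
def aN {Ω : Type} [MeasureSpace Ω] (v : Ω → ℝ) (N : ℕ) : ℝ :=
  sInf {u : ℝ | 0 < u ∧ tailP v u ≤ 1 / N}


/-- The truncated, renormalized symmetric random matrix with entries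
`a⁻¹ · x_{ij} 1_{|x_{ij}| ≤ c}`. -/
def truncMat {Ω : Type} (x : ℕ → ℕ → Ω → ℝ) (a c : ℝ) (ω : Ω) (N : ℕ) :
    Matrix (Fin N) (Fin N) ℝ :=
  Matrix.of fun i j =>
    a⁻¹ * (if |x (min (i.1 + 1) (j.1 + 1)) (max (i.1 + 1) (j.1 + 1)) ω| ≤ c
      then x (min (i.1 + 1) (j.1 + 1)) (max (i.1 + 1) (j.1 + 1)) ω else 0)

/-- The empirical spectral measure `(1/N) ∑ δ_{λ_i}` of a real symmetric matrix
(junk value `0` if the matrix is not symmetric). -/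
def espec {N : ℕ} (M : Matrix (Fin N) (Fin N) ℝ) : Measure ℝ :=
  letI := Classical.propDecidable
  if h : M.IsHermitian then
    ((N : ℝ≥0∞))⁻¹ • ∑ i, Measure.dirac (h.eigenvalues i)
  else 0

section AuxDet

open Finset Matrix




/-- number of entries ≤ t -/
def cnt {N : ℕ} (v : Fin N → ℝ) (t : ℝ) : ℕ :=
  (Finset.univ.filter (fun i => v i ≤ t)).card

lemma cnt_comp_perm {N : ℕ} (v : Fin N → ℝ) (σ : Equiv.Perm (Fin N)) (t : ℝ) :
    cnt (v ∘ σ) t = cnt v t := by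
  unfold cnt
  apply Finset.card_bij (fun i _ => σ i)
  · intro a ha; simp only [mem_filter, mem_univ, true_and] at *; exact ha
  · intro a _ b _ h; exact σ.injective h
  · intro b hb; exact ⟨σ.symm b, by simpa using hb, by simp⟩

lemma monotone_cnt_iff {N : ℕ} {v : Fin N → ℝ} (hv : Monotone v) (t : ℝ) (j : Fin N) :
    v j ≤ t ↔ j.1 < cnt v t := by
  constructor
  · intro h
    have hsub : (Finset.univ.filter (fun i : Fin N => i ≤ j)) ⊆
        (Finset.univ.filter (fun i => v i ≤ t)) := by
      intro i hi
      simp only [mem_filter, mem_univ, true_and] at *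
      exact le_trans (hv hi) h
    have := Finset.card_le_card hsub
    have hcard : (Finset.univ.filter (fun i : Fin N => i ≤ j)).card = j.1 + 1 := by
      have : (Finset.univ.filter (fun i : Fin N => i ≤ j)) = Finset.Iic j := by
        ext i; simp
      rw [this, Fin.card_Iic]
    unfold cnt; omega
  · intro h
    by_contra hc
    push_neg at hc
    have hsub : (Finset.univ.filter (fun i : Fin N => v i ≤ t)) ⊆
        (Finset.univ.filter (fun i : Fin N => i < j)) := by
      intro i hi
      simp only [mem_filter, mem_univ, true_and] at *
      by_contra hij
      push_neg at hij
      exact absurd (le_trans (hv hij) hi) (not_le.2 hc)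
    have h1 := Finset.card_le_card hsub
    have h2 : (Finset.univ.filter (fun i : Fin N => i < j)).card = j.1 := by
      have : (Finset.univ.filter (fun i : Fin N => i < j)) = Finset.Iio j := by
        ext i; simp
      rw [this, Fin.card_Iio]
    unfold cnt at h
    omega

lemma sorted_shift {N r : ℕ} {w v : Fin N → ℝ} (hw : Monotone w) (hv : Monotone v)
    (hcnt : ∀ t, cnt v t ≤ cnt w t + r) (i : Fin N) (h : i.1 + r < N) :
    w i ≤ v ⟨i.1 + r, h⟩ := by
  by_contra hc
  push_neg at hc
  set t := v ⟨i.1 + r, h⟩ with ht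
  have h1 : i.1 + r < cnt v t := (monotone_cnt_iff hv t _).1 le_rfl
  have h2 : cnt w t ≤ i.1 := by
    by_contra h2
    push_neg at h2
    exact absurd ((monotone_cnt_iff hw t i).2 h2) (not_le.2 hc)
  have := hcnt t
  omega

lemma sum_f_sub_le {N r : ℕ} {w v : Fin N → ℝ} (hw : Monotone w) (hv : Monotone v)
    (hcnt : ∀ t, cnt v t ≤ cnt w t + r) {f : ℝ → ℝ} (hf : Monotone f)
    {M : ℝ} (hM : 0 ≤ M) (hfM : ∀ s, |f s| ≤ M) :
    (∑ i, f (w i)) - ∑ i, f (v i) ≤ 2 * M * r := by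
  classical
  set W : ℕ → ℝ := fun i => if h : i < N then f (w ⟨i, h⟩) else 0 with hW
  set V : ℕ → ℝ := fun i => if h : i < N then f (v ⟨i, h⟩) else 0 with hV
  have hWb : ∀ i, |W i| ≤ M := by
    intro i; simp only [hW]; split
    · exact hfM _
    · simpa using hM
  have hVb : ∀ i, |V i| ≤ M := by
    intro i; simp only [hV]; split
    · exact hfM _
    · simpa using hM
  have hsumW : (∑ i, f (w i)) = ∑ i ∈ Finset.range N, W i := by
    rw [← Fin.sum_univ_eq_sum_range]
    apply Finset.sum_congr rfl
    intro i _
    simp only [hW, i.2, dif_pos, Fin.eta]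
  have hsumV : (∑ i, f (v i)) = ∑ i ∈ Finset.range N, V i := by
    rw [← Fin.sum_univ_eq_sum_range]
    apply Finset.sum_congr rfl
    intro i _
    simp only [hV, i.2, dif_pos, Fin.eta]
  rw [hsumW, hsumV]
  rcases le_or_gt N r with hNr | hrN
  · -- trivial case
    have h1 : ∑ i ∈ Finset.range N, W i ≤ N * M := by
      calc ∑ i ∈ Finset.range N, W i ≤ ∑ i ∈ Finset.range N, M :=
            Finset.sum_le_sum fun i _ => (abs_le.1 (hWb i)).2
        _ = N * M := by simp [mul_comm]
    have h2 : -(N * M) ≤ ∑ i ∈ Finset.range N, V i := by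
      calc (-(N*M) : ℝ) = ∑ i ∈ Finset.range N, (-M) := by simp [mul_comm]
        _ ≤ ∑ i ∈ Finset.range N, V i :=
            Finset.sum_le_sum fun i _ => (abs_le.1 (hVb i)).1
    have : (N : ℝ) ≤ r := by exact_mod_cast hNr
    nlinarith
  · have key : ∀ i < N - r, W i ≤ V (i + r) := by
      intro i hi
      have hiN : i < N := by omega
      have hirN : i + r < N := by omega
      simp only [hW, hV, dif_pos hiN, dif_pos hirN]
      exact hf (sorted_shift hw hv hcnt ⟨i, hiN⟩ hirN)
    have split1 : ∑ i ∈ Finset.range N, W i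
        ≤ (∑ i ∈ Finset.range (N - r), W i) + r * M := by
      have : ∑ i ∈ Finset.range (N - r), W i + ∑ i ∈ Finset.Ico (N - r) N, W i
          = ∑ i ∈ Finset.range N, W i := Finset.sum_range_add_sum_Ico _ (by omega)
      have hbd : ∑ i ∈ Finset.Ico (N - r) N, W i ≤ r * M := by
        calc ∑ i ∈ Finset.Ico (N - r) N, W i ≤ ∑ i ∈ Finset.Ico (N - r) N, M :=
              Finset.sum_le_sum fun i _ => (abs_le.1 (hWb i)).2
          _ = ((N - (N - r) : ℕ) : ℝ) * M := by
              rw [Finset.sum_const, Nat.card_Ico, nsmul_eq_mul]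
          _ = r * M := by
              have : N - (N - r) = r := by omega
              rw [this]
      linarith
    have split2 : ∑ i ∈ Finset.range (N - r), W i ≤ ∑ i ∈ Finset.range (N - r), V (i + r) :=
      Finset.sum_le_sum fun i hi => key i (Finset.mem_range.1 hi)
    have split3 : ∑ i ∈ Finset.range (N - r), V (i + r) = ∑ i ∈ Finset.Ico r N, V i := by
      rw [Finset.sum_Ico_eq_sum_range]
      exact Finset.sum_congr rfl fun i _ => by rw [add_comm]
    have split4 : ∑ i ∈ Finset.Ico r N, V i ≤ (∑ i ∈ Finset.range N, V i) + r * M := by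
      have heq : ∑ i ∈ Finset.range r, V i + ∑ i ∈ Finset.Ico r N, V i
          = ∑ i ∈ Finset.range N, V i := Finset.sum_range_add_sum_Ico _ (by omega)
      have hbd : -(r * M) ≤ ∑ i ∈ Finset.range r, V i := by
        calc (-(r * M) : ℝ) = ∑ i ∈ Finset.range r, (-M) := by simp [mul_comm]
          _ ≤ ∑ i ∈ Finset.range r, V i :=
              Finset.sum_le_sum fun i _ => (abs_le.1 (hVb i)).1
      linarith
    linarith





variable {N : ℕ}

lemma dot_eq_inner (v w : EuclideanSpace ℝ (Fin N)) :
    (v : Fin N → ℝ) ⬝ᵥ (w : Fin N → ℝ) = (inner ℝ v w : ℝ) := by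
  rw [PiLp.inner_apply]
  simp [dotProduct, mul_comm]

lemma inner_eq_sum_repr (b : OrthonormalBasis (Fin N) ℝ (EuclideanSpace ℝ (Fin N)))
    (v w : EuclideanSpace ℝ (Fin N)) :
    (inner ℝ v w : ℝ) = ∑ i, b.repr v i * b.repr w i := by
  rw [← LinearIsometryEquiv.inner_map_map b.repr v w, PiLp.inner_apply]
  simp [mul_comm]

lemma dot_basis_eq_repr (b : OrthonormalBasis (Fin N) ℝ (EuclideanSpace ℝ (Fin N)))
    (v : EuclideanSpace ℝ (Fin N)) (i : Fin N) :
    (b i : Fin N → ℝ) ⬝ᵥ (v : Fin N → ℝ) = b.repr v i := by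
  rw [b.repr_apply_apply, dot_eq_inner]

lemma repr_mulVec {A : Matrix (Fin N) (Fin N) ℝ} (hA : A.IsHermitian)
    (v : EuclideanSpace ℝ (Fin N)) (i : Fin N) :
    (hA.eigenvectorBasis.repr (WithLp.toLp 2 (A *ᵥ v : Fin N → ℝ)) i)
      = hA.eigenvalues i * hA.eigenvectorBasis.repr v i := by
  rw [← dot_basis_eq_repr, ← dot_basis_eq_repr]
  calc (hA.eigenvectorBasis i : Fin N → ℝ) ⬝ᵥ (A *ᵥ v)
      = ((hA.eigenvectorBasis i : Fin N → ℝ) ᵥ* A) ⬝ᵥ v := by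
        rw [Matrix.dotProduct_mulVec]
    _ = (Aᵀ *ᵥ (hA.eigenvectorBasis i : Fin N → ℝ)) ⬝ᵥ v := by
        rw [Matrix.mulVec_transpose]
    _ = (A *ᵥ (hA.eigenvectorBasis i : Fin N → ℝ)) ⬝ᵥ v := by
        congr 1
        rw [← Matrix.conjTranspose_eq_transpose_of_trivial, hA.eq]
    _ = hA.eigenvalues i * ((hA.eigenvectorBasis i : Fin N → ℝ) ⬝ᵥ v) := by
        erw [hA.mulVec_eigenvectorBasis]
        simp only [smul_dotProduct]
        rfl


lemma quad_expand {A : Matrix (Fin N) (Fin N) ℝ} (hA : A.IsHermitian)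
    (v : EuclideanSpace ℝ (Fin N)) :
    (v : Fin N → ℝ) ⬝ᵥ (A *ᵥ v) = ∑ i, hA.eigenvalues i * (hA.eigenvectorBasis.repr v i) ^ 2 := by
  rw [← WithLp.ofLp_toLp 2 (A *ᵥ v.ofLp)]
  rw [dot_eq_inner v (WithLp.toLp 2 (A *ᵥ v : Fin N → ℝ)), inner_eq_sum_repr hA.eigenvectorBasis]
  apply Finset.sum_congr rfl
  intro i _
  rw [repr_mulVec hA]
  ring

lemma dot_self_expand (b : OrthonormalBasis (Fin N) ℝ (EuclideanSpace ℝ (Fin N)))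
    (v : EuclideanSpace ℝ (Fin N)) :
    (v : Fin N → ℝ) ⬝ᵥ (v : Fin N → ℝ) = ∑ i, (b.repr v i) ^ 2 := by
  rw [dot_eq_inner, inner_eq_sum_repr b]
  apply Finset.sum_congr rfl
  intro i _
  ring

/-- membership in the span of a sub-family of an orthonormal basis kills outside coefficients -/
lemma repr_eq_zero_of_mem_span (b : OrthonormalBasis (Fin N) ℝ (EuclideanSpace ℝ (Fin N)))
    (S : Finset (Fin N)) {v : EuclideanSpace ℝ (Fin N)}
    (hv : v ∈ Submodule.span ℝ ((fun i => b i) '' ↑S)) {j : Fin N} (hj : j ∉ S) :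
    b.repr v j = 0 := by
  rw [b.repr_apply_apply]
  have : Submodule.span ℝ ((fun i => b i) '' ↑S) ≤
      LinearMap.ker ((innerSL ℝ (b j) : EuclideanSpace ℝ (Fin N) →L[ℝ] ℝ) : EuclideanSpace ℝ (Fin N) →ₗ[ℝ] ℝ) := by
    rw [Submodule.span_le]
    rintro w ⟨i, hi, rfl⟩
    simp only [SetLike.mem_coe, LinearMap.mem_ker, ContinuousLinearMap.coe_coe, innerSL_apply_apply]
    exact b.orthonormal.2 (fun h => hj (h ▸ hi))
  have := this hv
  simpa using this

lemma finrank_span_orthonormal (b : OrthonormalBasis (Fin N) ℝ (EuclideanSpace ℝ (Fin N)))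
    (S : Finset (Fin N)) :
    Module.finrank ℝ (Submodule.span ℝ ((fun i => b i) '' ↑S)) = S.card := by
  have hli : LinearIndependent ℝ (fun i : {i // i ∈ S} => b i) :=
    b.orthonormal.linearIndependent.comp Subtype.val Subtype.val_injective
  have hrange : Set.range (fun i : {i // i ∈ S} => b i) = (fun i => b i) '' ↑S := by
    ext w; constructor
    · rintro ⟨⟨i, hi⟩, rfl⟩; exact ⟨i, hi, rfl⟩
    · rintro ⟨i, hi, rfl⟩; exact ⟨⟨i, hi⟩, rfl⟩
  rw [← hrange, finrank_span_eq_card hli, Fintype.card_coe]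


lemma finrank_inf_ge (U V : Submodule ℝ (EuclideanSpace ℝ (Fin N))) :
    Module.finrank ℝ U + Module.finrank ℝ V - N ≤ Module.finrank ℝ (U ⊓ V : Submodule ℝ _) := by
  have h := Submodule.finrank_sup_add_finrank_inf_eq U V
  have h2 : Module.finrank ℝ (U ⊔ V : Submodule ℝ _) ≤ N := by
    have := Submodule.finrank_le (U ⊔ V : Submodule ℝ (EuclideanSpace ℝ (Fin N)))
    rwa [finrank_euclideanSpace_fin] at this
  omega

theorem cnt_eig_le (A B : Matrix (Fin N) (Fin N) ℝ) (hA : A.IsHermitian) (hB : B.IsHermitian)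
    (J : Finset (Fin N)) (hJ : ∀ i j, A i j ≠ B i j → i ∈ J) (t : ℝ) :
    cnt hA.eigenvalues t ≤ cnt hB.eigenvalues t + J.card := by
  by_contra hcon
  push_neg at hcon
  classical
  set bA := hA.eigenvectorBasis
  set bB := hB.eigenvectorBasis
  set SA : Finset (Fin N) := Finset.univ.filter (fun i => hA.eigenvalues i ≤ t) with hSA
  set SB : Finset (Fin N) := (Finset.univ.filter (fun i => hB.eigenvalues i ≤ t))ᶜ with hSB
  set bW : OrthonormalBasis (Fin N) ℝ (EuclideanSpace ℝ (Fin N)) :=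
    EuclideanSpace.basisFun (Fin N) ℝ with hbW
  set E : Submodule ℝ (EuclideanSpace ℝ (Fin N)) := Submodule.span ℝ ((fun i => bA i) '' ↑SA)
  set G : Submodule ℝ (EuclideanSpace ℝ (Fin N)) := Submodule.span ℝ ((fun i => bB i) '' ↑SB)
  set W : Submodule ℝ (EuclideanSpace ℝ (Fin N)) :=
    Submodule.span ℝ ((fun i => bW i) '' ↑(Finset.univ \ J))
  have hdimE : Module.finrank ℝ E = cnt hA.eigenvalues t := finrank_span_orthonormal bA SA
  have hdimG : Module.finrank ℝ G = N - cnt hB.eigenvalues t := by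
    rw [finrank_span_orthonormal bB SB, hSB, Finset.card_compl]
    simp only [Fintype.card_fin]
    rfl
  have hdimW : Module.finrank ℝ W = N - J.card := by
    rw [finrank_span_orthonormal bW]
    rw [Finset.card_sdiff_of_subset (Finset.subset_univ J)]
    simp
  -- the triple intersection is nontrivial
  have hcntB_le : cnt hB.eigenvalues t ≤ N := by
    unfold cnt
    calc _ ≤ (Finset.univ : Finset (Fin N)).card := Finset.card_le_card (Finset.filter_subset _ _)
      _ = N := by simp
  have hJ_le : J.card ≤ N := by
    calc _ ≤ (Finset.univ : Finset (Fin N)).card := Finset.card_le_card (Finset.subset_univ _)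
      _ = N := by simp
  have hdim : 0 < Module.finrank ℝ (E ⊓ (G ⊓ W) : Submodule ℝ (EuclideanSpace ℝ (Fin N))) := by
    have h1 := finrank_inf_ge G W
    have h2 := finrank_inf_ge E (G ⊓ W)
    omega
  obtain ⟨v, hvmem, hvne⟩ : ∃ v, v ∈ (E ⊓ (G ⊓ W) : Submodule ℝ (EuclideanSpace ℝ (Fin N))) ∧ v ≠ 0 := by
    rw [Module.finrank_pos_iff_exists_ne_zero] at hdim
    obtain ⟨⟨v, hv⟩, hne⟩ := hdim
    exact ⟨v, hv, fun h => hne (Subtype.ext h)⟩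
  obtain ⟨hvE, hvG, hvW⟩ : v ∈ E ∧ v ∈ G ∧ v ∈ W := by
    exact ⟨hvmem.1, hvmem.2.1, hvmem.2.2⟩
  -- (a) quadratic form bound for A
  have ha : (v : Fin N → ℝ) ⬝ᵥ (A *ᵥ v) ≤ t * ((v : Fin N → ℝ) ⬝ᵥ (v : Fin N → ℝ)) := by
    rw [quad_expand hA, dot_self_expand bA, Finset.mul_sum]
    apply Finset.sum_le_sum
    intro i _
    by_cases hi : i ∈ SA
    · have : hA.eigenvalues i ≤ t := by simpa [hSA] using hi
      exact mul_le_mul_of_nonneg_right this (sq_nonneg _)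
    · rw [repr_eq_zero_of_mem_span bA SA hvE hi]
      simp
  -- (b) strict quadratic form bound for B
  have hb : t * ((v : Fin N → ℝ) ⬝ᵥ (v : Fin N → ℝ)) < (v : Fin N → ℝ) ⬝ᵥ (B *ᵥ v) := by
    rw [quad_expand hB, dot_self_expand bB, Finset.mul_sum]
    rw [← sub_pos, ← Finset.sum_sub_distrib]
    have hterm : ∀ i, (hB.eigenvalues i * bB.repr v i ^ 2 - t * bB.repr v i ^ 2)
        = (hB.eigenvalues i - t) * bB.repr v i ^ 2 := fun i => by ring
    apply Finset.sum_pos'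
    · intro i _
      rw [hterm]
      by_cases hi : i ∈ SB
      · have hti : t < hB.eigenvalues i := by
          rw [hSB, Finset.mem_compl, Finset.mem_filter] at hi
          push_neg at hi
          exact hi (Finset.mem_univ i)
        nlinarith [sq_nonneg (bB.repr v i)]
      · rw [repr_eq_zero_of_mem_span bB SB hvG hi]
        simp
    · -- some coefficient is nonzero
      have hrepr_ne : bB.repr v ≠ 0 := by
        intro h
        apply hvne
        have := bB.repr.map_eq_zero_iff (x := v)
        rw [← this]; exact h
      obtain ⟨i, hi⟩ : ∃ i, bB.repr v i ≠ 0 := by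
        by_contra hc
        push_neg at hc
        exact hrepr_ne (PiLp.ext fun i => hc i)
      have hiSB : i ∈ SB := by
        by_contra hc
        exact hi (repr_eq_zero_of_mem_span bB SB hvG hc)
      refine ⟨i, Finset.mem_univ i, ?_⟩
      rw [hterm]
      have : t < hB.eigenvalues i := by
        rw [hSB, Finset.mem_compl, Finset.mem_filter] at hiSB
        push_neg at hiSB
        exact hiSB (Finset.mem_univ i)
      have h2 : (0:ℝ) < bB.repr v i ^ 2 := by positivity
      nlinarith
  -- (c) coordinates of v vanish on J
  have hcoord : ∀ j ∈ J, v j = 0 := by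
    intro j hj
    have hjnot : j ∉ Finset.univ \ J := by simp [hj]
    have := repr_eq_zero_of_mem_span bW _ hvW hjnot
    rwa [hbW, EuclideanSpace.basisFun_repr] at this
  -- (d) quadratic forms agree
  have hd : (v : Fin N → ℝ) ⬝ᵥ (A *ᵥ v) = (v : Fin N → ℝ) ⬝ᵥ (B *ᵥ v) := by
    unfold dotProduct
    apply Finset.sum_congr rfl
    intro i _
    by_cases hi : i ∈ J
    · rw [hcoord i hi]
      ring
    · have : (A *ᵥ (v : Fin N → ℝ)) i = (B *ᵥ (v : Fin N → ℝ)) i := by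
        unfold Matrix.mulVec dotProduct
        apply Finset.sum_congr rfl
        intro j _
        by_cases hij : A i j = B i j
        · change A i j * v j = B i j * v j
          rw [hij]
        · exact absurd (hJ i j hij) hi
      rw [this]
  linarith


lemma integrable_dirac_meas {f : ℝ → ℝ} (hf : Measurable f) (a : ℝ) :
    MeasureTheory.Integrable f (MeasureTheory.Measure.dirac a) := by
  refine ⟨hf.aestronglyMeasurable, ?_⟩
  show (∫⁻ x, ‖f x‖₊ ∂(MeasureTheory.Measure.dirac a)) < ⊤
  rw [MeasureTheory.lintegral_dirac' a (by measurability)]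
  exact ENNReal.coe_lt_top

lemma integral_espec {N : ℕ} {M : Matrix (Fin N) (Fin N) ℝ} (hM : M.IsHermitian)
    {f : ℝ → ℝ} (hf : Measurable f) :
    ∫ t, f t ∂(espec M) = (N : ℝ)⁻¹ * ∑ i, f (hM.eigenvalues i) := by
  unfold espec
  rw [dif_pos hM]
  rw [MeasureTheory.integral_smul_measure]
  rw [MeasureTheory.integral_finset_sum_measure (fun i _ => integrable_dirac_meas hf _)]
  simp only [MeasureTheory.integral_dirac, smul_eq_mul]
  congr 1
  rw [ENNReal.toReal_inv]
  simp

lemma abs_sum_f_diff_le {N r : ℕ} (lam mu : Fin N → ℝ)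
    (h1 : ∀ t, cnt lam t ≤ cnt mu t + r) (h2 : ∀ t, cnt mu t ≤ cnt lam t + r)
    {f : ℝ → ℝ} (hf : Monotone f) {Mb : ℝ} (hM : 0 ≤ Mb) (hfM : ∀ s, |f s| ≤ Mb) :
    |(∑ i, f (lam i)) - ∑ i, f (mu i)| ≤ 2 * Mb * r := by
  have sorteq : ∀ v : Fin N → ℝ, (∑ i, f ((v ∘ Tuple.sort v) i)) = ∑ i, f (v i) := by
    intro v
    exact Equiv.sum_comp (Tuple.sort v) (fun i => f (v i))
  have key : ∀ v w : Fin N → ℝ, (∀ t, cnt w t ≤ cnt v t + r) →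
      (∑ i, f (v i)) - (∑ i, f (w i)) ≤ 2 * Mb * r := by
    intro v w hc
    rw [← sorteq v, ← sorteq w]
    apply sum_f_sub_le (Tuple.monotone_sort v) (Tuple.monotone_sort w) _ hf hM hfM
    intro t
    rw [cnt_comp_perm, cnt_comp_perm]
    exact hc t
  rw [abs_sub_le_iff]
  exact ⟨key lam mu h2, key mu lam h1⟩

lemma d1_espec_le {N : ℕ} (A B : Matrix (Fin N) (Fin N) ℝ)
    (hA : A.IsHermitian) (hB : B.IsHermitian) (J : Finset (Fin N))
    (hJ : ∀ i j, A i j ≠ B i j → i ∈ J) :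
    d1 (espec A) (espec B) ≤ 2 * J.card / N := by
  have hbound : (0:ℝ) ≤ 2 * J.card / N := by positivity
  apply Real.sSup_le _ hbound
  rintro x ⟨f, hmono, ⟨K, Mb, hK, hM, hKM, hlip, hfM⟩, rfl⟩
  have hfmeas : Measurable f := hmono.measurable
  rw [integral_espec hA hfmeas, integral_espec hB hfmeas]
  rcases Nat.eq_zero_or_pos N with hN | hN
  · subst hN
    simp
  have hJ' : ∀ i j, B i j ≠ A i j → i ∈ J := fun i j h => hJ i j (Ne.symm h)
  have habs : |(∑ i, f (hA.eigenvalues i)) - ∑ i, f (hB.eigenvalues i)| ≤ 2 * Mb * J.card :=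
    abs_sum_f_diff_le _ _ (fun t => cnt_eig_le A B hA hB J hJ t)
      (fun t => cnt_eig_le B A hB hA J hJ' t) hmono hM hfM
  rw [← mul_sub, abs_mul, abs_inv, Nat.abs_cast]
  have hMb1 : Mb ≤ 1 := by linarith
  have hNpos : (0:ℝ) < N := by exact_mod_cast hN
  rw [div_eq_mul_inv, mul_comm (2 * (J.card:ℝ)) (N:ℝ)⁻¹ ]
  apply mul_le_mul_of_nonneg_left _ (by positivity)
  calc |(∑ i, f (hA.eigenvalues i)) - ∑ i, f (hB.eigenvalues i)| ≤ 2 * Mb * J.card := habs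
    _ ≤ 2 * J.card := by nlinarith [Nat.cast_nonneg (α := ℝ) J.card]

end AuxDet


section AuxTail

open Filter Topology MeasureTheory

variable {Ω : Type} [MeasureSpace Ω] [IsProbabilityMeasure (ℙ : Measure Ω)]

lemma tailP_antitone (v : Ω → ℝ) : Antitone (tailP v) := by
  intro a b hab
  unfold tailP
  apply ENNReal.toReal_mono (measure_ne_top _ _)
  apply measure_mono
  intro ω h
  exact le_trans hab h

lemma tailP_nonneg (v : Ω → ℝ) (u : ℝ) : 0 ≤ tailP v u := ENNReal.toReal_nonneg

lemma tailP_pos {v : Ω → ℝ} {L : ℝ → ℝ} {α : ℝ}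
    (hL : ∀ c > (0:ℝ), Tendsto (fun t => L (c*t)/L t) atTop (𝓝 1))
    (htail : ∀ u > (0:ℝ), tailP v u = L u / u ^ α) {u : ℝ} (hu : 0 < u) :
    0 < tailP v u := by
  rcases lt_or_eq_of_le (tailP_nonneg v u) with h | h
  · exact h
  exfalso
  have hzero : ∀ t, u ≤ t → L t = 0 := by
    intro t ht
    have htpos : 0 < t := lt_of_lt_of_le hu ht
    have h0 : tailP v t = 0 :=
      le_antisymm (h ▸ tailP_antitone v ht) (tailP_nonneg v t)
    have heq := htail t htpos
    rw [h0] at heq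
    have hpow : (0:ℝ) < t ^ α := Real.rpow_pos_of_pos htpos α
    rcases div_eq_zero_iff.1 heq.symm with h1 | h1
    · exact h1
    · exact absurd h1 (ne_of_gt hpow)
  have h2 : Tendsto (fun t => L (2*t)/L t) atTop (𝓝 1) := hL 2 (by norm_num)
  have h0 : Tendsto (fun t : ℝ => L (2*t)/L t) atTop (𝓝 0) := by
    apply Tendsto.congr' _ tendsto_const_nhds
    filter_upwards [eventually_ge_atTop u] with t ht
    rw [hzero t ht, hzero (2*t) (by nlinarith)]
    simp
  have := tendsto_nhds_unique h0 h2
  norm_num at this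

lemma exists_tail_le (v : Ω → ℝ) (hmeas : Measurable v) {ε : ℝ} (hε : 0 < ε) :
    ∃ u : ℝ, 0 < u ∧ tailP v u ≤ ε := by
  set s : ℕ → Set Ω := fun n => {ω | (n:ℝ) ≤ |v ω|} with hs
  have hms : ∀ n, MeasurableSet (s n) :=
    fun n => measurableSet_le measurable_const hmeas.abs
  have hanti : Antitone s := by
    intro m n hmn ω h
    exact le_trans ((Nat.cast_le (α := ℝ)).2 hmn) h
  have hiInter : (⋂ n, s n) = ∅ := by
    ext ω
    simp only [Set.mem_iInter, Set.mem_empty_iff_false, iff_false, not_forall]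
    obtain ⟨n, hn⟩ := exists_nat_gt |v ω|
    exact ⟨n, fun h => absurd h (not_le.2 hn)⟩
  have htend : Tendsto (fun n => ℙ (s n)) atTop (𝓝 (ℙ (⋂ n, s n))) :=
    tendsto_measure_iInter_atTop (fun n => (hms n).nullMeasurableSet) hanti ⟨0, measure_ne_top _ _⟩
  rw [hiInter, measure_empty] at htend
  have : ∀ᶠ n : ℕ in atTop, ℙ (s n) < ENNReal.ofReal ε := by
    apply htend.eventually_lt_const
    simp [hε]
  obtain ⟨n, hn⟩ := ((this.and (eventually_ge_atTop 1)).exists)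
  refine ⟨n, by exact_mod_cast Nat.lt_of_lt_of_le one_pos hn.2, ?_⟩
  have : tailP v n = (ℙ (s n)).toReal := rfl
  rw [this]
  calc (ℙ (s n)).toReal ≤ (ENNReal.ofReal ε).toReal :=
        ENNReal.toReal_mono (by simp) hn.1.le
    _ = ε := ENNReal.toReal_ofReal hε.le

lemma aN_set_nonempty (v : Ω → ℝ) (hmeas : Measurable v) {N : ℕ} (hN : 1 ≤ N) :
    {u : ℝ | 0 < u ∧ tailP v u ≤ 1 / N}.Nonempty := by
  obtain ⟨u, hu, hle⟩ := exists_tail_le v hmeas (ε := 1/N)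
    (by positivity)
  exact ⟨u, hu, hle⟩

lemma tailP_le_of_gt_aN (v : Ω → ℝ) (hmeas : Measurable v) {N : ℕ} (hN : 1 ≤ N)
    {u : ℝ} (hu : aN v N < u) : tailP v u ≤ 1 / N := by
  have hbdd : BddBelow {u : ℝ | 0 < u ∧ tailP v u ≤ 1 / N} :=
    ⟨0, fun y hy => hy.1.le⟩
  obtain ⟨y, hy, hyu⟩ := (csInf_lt_iff hbdd (aN_set_nonempty v hmeas hN)).1 hu
  exact le_trans (tailP_antitone v hyu.le) hy.2

lemma tendsto_aN {v : Ω → ℝ} (hmeas : Measurable v) {L : ℝ → ℝ} {α : ℝ}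
    (hL : ∀ c > (0:ℝ), Tendsto (fun t => L (c*t)/L t) atTop (𝓝 1))
    (htail : ∀ u > (0:ℝ), tailP v u = L u / u ^ α) :
    Tendsto (fun N : ℕ => aN v N) atTop atTop := by
  rw [tendsto_atTop]
  intro b
  set M := max b 1 with hM
  have hMpos : (0:ℝ) < M := lt_of_lt_of_le one_pos (le_max_right _ _)
  have hpos := tailP_pos hL htail hMpos
  obtain ⟨N₀, hN₀⟩ := exists_nat_gt (1 / tailP v M)
  filter_upwards [eventually_ge_atTop (max N₀ 1)] with N hN
  have hN1 : 1 ≤ N := le_trans (le_max_right _ _) hN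
  have hNN₀ : N₀ ≤ N := le_trans (le_max_left _ _) hN
  have hNr : 1 / (N:ℝ) < tailP v M := by
    rw [div_lt_iff₀ (by positivity : (0:ℝ) < (N:ℝ))]
    rw [div_lt_iff₀ hpos] at hN₀
    have : (N₀:ℝ) ≤ N := by exact_mod_cast hNN₀
    nlinarith
  have hlb : M ≤ aN v N := by
    apply le_csInf (aN_set_nonempty v hmeas hN1)
    intro u hu
    by_contra hc
    push_neg at hc
    have := tailP_antitone v hc.le
    have := lt_of_lt_of_le hNr this
    exact absurd hu.2 (not_le.2 this)
  exact le_trans (le_max_left b 1) hlb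

lemma prob_exceed_le {v : Ω → ℝ} (hmeas : Measurable v) {L : ℝ → ℝ} {α : ℝ}
    (hα : 0 < α) (hα2 : α < 2)
    (hL : ∀ c > (0:ℝ), Tendsto (fun t => L (c*t)/L t) atTop (𝓝 1))
    (htail : ∀ u > (0:ℝ), tailP v u = L u / u ^ α) {B : ℝ} (hB : 1 ≤ B) :
    ∀ᶠ N : ℕ in atTop, ℙ {ω | B * aN v N < |v ω|} ≤ ENNReal.ofReal (8 * B ^ (-α) / N) := by
  have hta := tendsto_aN hmeas hL htail
  have h2a : Tendsto (fun N : ℕ => 2 * aN v N) atTop atTop :=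
    (tendsto_const_mul_atTop_of_pos (by norm_num : (0:ℝ) < 2)).2 hta
  have hB2 : (0:ℝ) < B / 2 := by linarith
  have hratio : Tendsto (fun N : ℕ => L ((B/2) * (2 * aN v N)) / L (2 * aN v N)) atTop (𝓝 1) :=
    (hL (B/2) hB2).comp h2a
  have hrev : ∀ᶠ N : ℕ in atTop, L ((B/2) * (2 * aN v N)) / L (2 * aN v N) ≤ 2 := by
    apply hratio.eventually_le_const
    norm_num
  filter_upwards [hrev, hta.eventually_ge_atTop 1, eventually_ge_atTop 1] with N hratN haN hN1
  set a := aN v N with ha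
  have hapos : (0:ℝ) < a := lt_of_lt_of_le one_pos haN
  set t := 2 * a with htdef
  have htpos : (0:ℝ) < t := by positivity
  have h1 : tailP v t ≤ 1 / N := tailP_le_of_gt_aN v hmeas hN1 (by simp only [htdef]; linarith)
  have h3 : tailP v t = L t / t ^ α := htail t htpos
  have hLt : 0 < L t := by
    have hp := tailP_pos hL htail htpos
    rw [h3] at hp
    by_contra hc
    push_neg at hc
    have : L t / t ^ α ≤ 0 :=
      div_nonpos_of_nonpos_of_nonneg hc (Real.rpow_pos_of_pos htpos α).le
    linarith
  have hBt : (0:ℝ) < (B/2) * t := by positivity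
  have h2 : tailP v ((B/2) * t) = L ((B/2)*t) / ((B/2)*t) ^ α := htail _ hBt
  have hsplit : ((B/2)*t) ^ α = (B/2) ^ α * t ^ α :=
    Real.mul_rpow hB2.le htpos.le
  have hfactor : tailP v ((B/2) * t)
      = (L ((B/2)*t) / L t) * ((B/2) ^ (-α)) * (L t / t ^ α) := by
    rw [h2, hsplit, Real.rpow_neg hB2.le]
    have htα : (0:ℝ) < t ^ α := Real.rpow_pos_of_pos htpos α
    have hBα : (0:ℝ) < (B/2) ^ α := Real.rpow_pos_of_pos hB2 α
    field_simp
  have hbound : tailP v ((B/2)*t) ≤ 2 * ((B/2) ^ (-α)) * (1 / N) := by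
    have hLBt : 0 ≤ L ((B/2)*t) := by
      have h0 := tailP_nonneg v ((B/2)*t)
      rw [h2] at h0
      have hp : (0:ℝ) < ((B/2)*t) ^ α := Real.rpow_pos_of_pos hBt α
      have hexp : L ((B/2)*t) = (L ((B/2)*t) / ((B/2)*t) ^ α) * ((B/2)*t) ^ α := by
        field_simp
      nlinarith
    rw [hfactor, ← h3]
    have hBα : (0:ℝ) < (B/2) ^ (-α) := Real.rpow_pos_of_pos hB2 (-α)
    have h0t : 0 ≤ tailP v t := tailP_nonneg v t
    have hr0 : 0 ≤ L ((B/2)*t) / L t := div_nonneg hLBt hLt.le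
    have step1 : (L ((B/2)*t) / L t) * ((B/2) ^ (-α)) ≤ 2 * ((B/2) ^ (-α)) :=
      mul_le_mul_of_nonneg_right hratN hBα.le
    calc (L ((B/2)*t) / L t) * ((B/2) ^ (-α)) * tailP v t
        ≤ 2 * ((B/2) ^ (-α)) * tailP v t := mul_le_mul_of_nonneg_right step1 h0t
      _ ≤ 2 * ((B/2) ^ (-α)) * (1/N) := mul_le_mul_of_nonneg_left h1 (by positivity)
  have hB2α : (B/2) ^ (-α) ≤ 4 * B ^ (-α) := by
    have hBpos : (0:ℝ) < B := by linarith
    have hkey : (B/2) ^ (-α) = B ^ (-α) * 2 ^ α := by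
      rw [div_eq_mul_inv, Real.mul_rpow hBpos.le (by norm_num : (0:ℝ) ≤ 2⁻¹),
        Real.inv_rpow (by norm_num : (0:ℝ) ≤ 2), Real.rpow_neg (by norm_num : (0:ℝ) ≤ 2),
        inv_inv]
    have h2α : (2:ℝ) ^ α ≤ 4 := by
      calc (2:ℝ) ^ α ≤ 2 ^ (2:ℝ) :=
            Real.rpow_le_rpow_of_exponent_le (by norm_num) hα2.le
        _ = 4 := by
            rw [show ((2:ℝ):ℝ) = ((2:ℕ):ℝ) by norm_num, Real.rpow_natCast]
            norm_num
    have hBα : (0:ℝ) ≤ B ^ (-α) := (Real.rpow_pos_of_pos hBpos _).le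
    rw [hkey]
    nlinarith
  have hfin : tailP v (B * a) ≤ 8 * B ^ (-α) / N := by
    have hBt_eq : (B/2) * t = B * a := by rw [htdef]; ring
    rw [← hBt_eq]
    have hNpos : (0:ℝ) < N := by exact_mod_cast hN1
    have hBα : (0:ℝ) ≤ B ^ (-α) := (Real.rpow_pos_of_pos (by linarith) _).le
    calc tailP v ((B/2)*t) ≤ 2 * ((B/2) ^ (-α)) * (1/N) := hbound
      _ ≤ 2 * (4 * B ^ (-α)) * (1/N) := by
          apply mul_le_mul_of_nonneg_right _ (by positivity)
          nlinarith
      _ = 8 * B ^ (-α) / N := by ring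
  calc ℙ {ω | B * a < |v ω|} ≤ ℙ {ω | B * a ≤ |v ω|} :=
        measure_mono (Set.setOf_subset_setOf.2 (fun ω h => le_of_lt h))
    _ = ENNReal.ofReal (tailP v (B * a)) := by
        rw [tailP]
        exact (ENNReal.ofReal_toReal (measure_ne_top _ _)).symm
    _ ≤ ENNReal.ofReal (8 * B ^ (-α) / N) := ENNReal.ofReal_le_ofReal hfin

end AuxTail


section AuxProb

open MeasureTheory Filter

open scoped Classical in
lemma union_indep_bound {Ω : Type} [MeasureSpace Ω] {ι : Type} [DecidableEq ι]
    (F : Finset ι) (E : ι → Set Ω) (q : ℝ≥0∞) (m : ℕ)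
    (hprob : ∀ i ∈ F, ℙ (E i) ≤ q)
    (hind : ∀ T ⊆ F, ℙ (⋂ i ∈ T, E i) = ∏ i ∈ T, ℙ (E i)) :
    ℙ {ω | m ≤ (F.filter (fun i => ω ∈ E i)).card} ≤ (F.card.choose m) * q ^ m := by
  have hsub : {ω | m ≤ (F.filter (fun i => ω ∈ E i)).card}
      ⊆ ⋃ T ∈ F.powersetCard m, ⋂ i ∈ T, E i := by
    intro ω hω
    obtain ⟨T, hTsub, hTcard⟩ := Finset.exists_subset_card_eq hω
    refine Set.mem_biUnion (Finset.mem_powersetCard.2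
      ⟨hTsub.trans (Finset.filter_subset _ _), hTcard⟩) ?_
    exact Set.mem_iInter₂.2 fun i hi => (Finset.mem_filter.1 (hTsub hi)).2
  calc ℙ {ω | m ≤ (F.filter (fun i => ω ∈ E i)).card}
      ≤ ℙ (⋃ T ∈ F.powersetCard m, ⋂ i ∈ T, E i) := measure_mono hsub
    _ ≤ ∑ T ∈ F.powersetCard m, ℙ (⋂ i ∈ T, E i) := measure_biUnion_finset_le _ _
    _ ≤ ∑ _T ∈ F.powersetCard m, q ^ m := by
        apply Finset.sum_le_sum
        intro T hT
        obtain ⟨hTF, hTc⟩ := Finset.mem_powersetCard.1 hT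
        rw [hind T hTF]
        calc ∏ i ∈ T, ℙ (E i) ≤ ∏ _i ∈ T, q :=
              Finset.prod_le_prod' (fun i hi => hprob i (hTF hi))
          _ = q ^ m := by rw [Finset.prod_const, hTc]
    _ = (F.card.choose m) * q ^ m := by
        rw [Finset.sum_const, Finset.card_powersetCard, nsmul_eq_mul]

lemma pow_div_factorial_le_exp (m : ℕ) : (m:ℝ) ^ m / m.factorial ≤ Real.exp m := by
  have h := Real.sum_le_exp_of_nonneg (x := (m:ℝ)) (Nat.cast_nonneg m) (m+1)
  refine le_trans ?_ h
  exact Finset.single_le_sum (f := fun i => (m:ℝ) ^ i / i.factorial)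
    (fun i _ => by positivity) (Finset.self_mem_range_succ m)

/-- the key numeric estimate -/
lemma numeric_bound {ε Bα : ℝ} (hε : 0 < ε) (hBα : 32 * Real.exp 2 / ε ≤ Bα) (hBαpos : 0 < Bα)
    {N m P : ℕ} (hN : 1 ≤ N) (hP : P ≤ N ^ 2) (hm : ε * N / 4 < m) :
    (P.choose m : ℝ) * (8 * Bα⁻¹ / N) ^ m ≤ Real.exp (-(ε/4) * N) := by
  have hNpos : (0:ℝ) < N := by exact_mod_cast hN
  have hmpos : 0 < m := by
    by_contra hc
    push_neg at hc
    interval_cases m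
    · simp at hm; nlinarith
  have hmposR : (0:ℝ) < m := by exact_mod_cast hmpos
  have hq0 : (0:ℝ) ≤ 8 * Bα⁻¹ / N := by positivity
  have r1 : (P.choose m : ℝ) ≤ ((N ^ 2).choose m : ℝ) := by
    exact_mod_cast Nat.choose_le_choose m hP
  have r2 : ((N ^ 2).choose m : ℝ) ≤ ((N:ℝ) ^ 2) ^ m / m.factorial := by
    have := Nat.choose_le_pow_div (α := ℝ) m (N ^ 2)
    push_cast at this
    exact this
  have hfact : (0:ℝ) < m.factorial := by exact_mod_cast m.factorial_pos
  have r5 : (1:ℝ) / m.factorial ≤ Real.exp 1 ^ m / (m:ℝ) ^ m := by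
    have h := pow_div_factorial_le_exp m
    rw [← Real.exp_one_rpow (m:ℝ), Real.rpow_natCast] at h
    rw [div_le_div_iff₀ hfact (by positivity), one_mul]
    rw [div_le_iff₀ hfact] at h
    nlinarith
  set e := Real.exp 1 with he_def
  have he : 0 < e := Real.exp_pos 1
  have hexp2 : Real.exp 2 = e * e := by
    rw [he_def, ← Real.exp_add]; norm_num
  have hBinv : Bα⁻¹ ≤ ε / (32 * Real.exp 2) := by
    have h32 : (0:ℝ) < 32 * Real.exp 2 / ε := by positivity
    have := inv_anti₀ h32 hBα
    rwa [inv_div] at this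
  have base_le : 8 * (N:ℝ) * Bα⁻¹ * e / m ≤ Real.exp (-1) := by
    rw [Real.exp_neg, ← he_def, div_le_iff₀ hmposR]
    have step : 8 * (N:ℝ) * Bα⁻¹ * e ≤ 8 * (N:ℝ) * (ε / (32 * Real.exp 2)) * e := by
      have h8Ne : (0:ℝ) ≤ 8 * (N:ℝ) := by positivity
      have := mul_le_mul_of_nonneg_left hBinv h8Ne
      exact mul_le_mul_of_nonneg_right this he.le
    have step2 : 8 * (N:ℝ) * (ε / (32 * Real.exp 2)) * e = (ε * N / 4) * e⁻¹ := by
      rw [hexp2]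
      field_simp
      ring
    have step3 : (ε * N / 4) * e⁻¹ ≤ (m:ℝ) * e⁻¹ :=
      mul_le_mul_of_nonneg_right hm.le (by positivity)
    calc 8 * (N:ℝ) * Bα⁻¹ * e ≤ (ε * N / 4) * e⁻¹ := by rw [← step2]; exact step
      _ ≤ (m:ℝ) * e⁻¹ := step3
      _ = e⁻¹ * m := by ring
  calc (P.choose m : ℝ) * (8 * Bα⁻¹ / N) ^ m
      ≤ (((N:ℝ)^2)^m / m.factorial) * (8 * Bα⁻¹ / N) ^ m :=
        mul_le_mul_of_nonneg_right (r1.trans r2) (pow_nonneg hq0 m)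
    _ = (8 * N * Bα⁻¹)^m * (1 / m.factorial) := by
        rw [div_mul_eq_mul_div, ← mul_pow,
          show ((N:ℝ)^2) * (8 * Bα⁻¹ / N) = 8 * N * Bα⁻¹ by field_simp]
        ring
    _ ≤ (8 * N * Bα⁻¹)^m * (e^m / (m:ℝ)^m) :=
        mul_le_mul_of_nonneg_left r5 (by positivity)
    _ = (8 * N * Bα⁻¹ * e / m)^m := by
        rw [div_pow, mul_pow, mul_pow, mul_pow]
        ring
    _ ≤ (Real.exp (-1))^m := pow_le_pow_left₀ (by positivity) base_le m
    _ = Real.exp (-(m:ℝ)) := by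
        rw [← Real.exp_nat_mul]
        congr 1
        ring
    _ ≤ Real.exp (-(ε/4) * N) := Real.exp_le_exp.2 (by nlinarith)

end AuxProb

/-- **Theorem 2.2 (1)**: for every `ε > 0` there is `B(ε) < ∞` such that for every
`B > B(ε)` there is `δ(ε,B) > 0` with
`ℙ(d₁(μ̂_{A_N}, μ̂_{A_N^B}) > ε) ≤ e^{−δ(ε,B) N}` for all large `N`. -/
theorem d1_truncation_B_exponential_bound
    (α : ℝ) (hα : α ∈ Set.Ioo (0 : ℝ) 2)
    (Ω : Type) [MeasureSpace Ω] [IsProbabilityMeasure (ℙ : Measure Ω)]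
    (x : ℕ → ℕ → Ω → ℝ) (L : ℝ → ℝ)
    (hmeas : ∀ i j, Measurable (x i j))
    (hident : ∀ i j : ℕ, 1 ≤ i → i ≤ j →
      Measure.map (x i j) ℙ = Measure.map (x 1 1) ℙ)
    (hindep : iIndepFun
      (fun p : {p : ℕ × ℕ // 1 ≤ p.1 ∧ p.1 ≤ p.2} => x p.1.1 p.1.2) ℙ)
    (hL : ∀ c > (0 : ℝ), Tendsto (fun t => L (c * t) / L t) atTop (𝓝 1))
    (htail : ∀ u > (0 : ℝ), tailP (x 1 1) u = L u / u ^ α) :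
    ∀ ε > (0 : ℝ), ∃ B₀ : ℝ, ∀ B > B₀, ∃ δ > (0 : ℝ), ∃ N₀ : ℕ, ∀ N ≥ N₀,
      ℙ {ω : Ω |
          ε < d1 (espec ((aN (x 1 1) N)⁻¹ • symMat x ω N))
                (espec (truncMat x (aN (x 1 1) N) (B * aN (x 1 1) N) ω N))}
        ≤ ENNReal.ofReal (Real.exp (-δ * N)) := by
  classical
  intro ε hε
  set v := x 1 1 with hv_def
  have hv : Measurable v := hmeas 1 1
  obtain ⟨hα1, hα2⟩ := hα
  set c0 : ℝ := 32 * Real.exp 2 / ε with hc0_def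
  have hc0pos : 0 < c0 := by positivity
  refine ⟨max 1 (c0 ^ α⁻¹), ?_⟩
  intro B hB
  have hB1 : 1 ≤ B := le_of_lt (lt_of_le_of_lt (le_max_left _ _) hB)
  have hBpos : (0:ℝ) < B := lt_of_lt_of_le one_pos hB1
  have hBα : c0 ≤ B ^ α := by
    have h1 : c0 ^ α⁻¹ ≤ B := le_of_lt (lt_of_le_of_lt (le_max_right _ _) hB)
    have h2 : (c0 ^ α⁻¹) ^ α ≤ B ^ α :=
      Real.rpow_le_rpow (Real.rpow_nonneg hc0pos.le _) h1 hα1.le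
    rwa [← Real.rpow_mul hc0pos.le, inv_mul_cancel₀ (ne_of_gt hα1), Real.rpow_one] at h2
  have hBαpos : 0 < B ^ α := Real.rpow_pos_of_pos hBpos α
  refine ⟨ε / 4, by positivity, ?_⟩
  have hEv2 := (prob_exceed_le hv hα1 hα2 hL htail hB1).and (Filter.eventually_ge_atTop 1)
  obtain ⟨N₀, hN₀⟩ := Filter.eventually_atTop.1 hEv2
  refine ⟨N₀, ?_⟩
  intro N hNge
  obtain ⟨hq, hN1⟩ := hN₀ N hNge
  set a := aN v N with ha_def
  set c := B * a with hc_def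
  set m := Nat.floor (ε * N / 4) + 1 with hm_def
  have hNR : (0:ℝ) < N := by exact_mod_cast hN1
  have hmR : ε * N / 4 < (m:ℝ) := by
    have := Nat.lt_floor_add_one (ε * N / 4)
    rw [hm_def]
    push_cast
    exact this
  -- the index finset and events
  set U : Set ℝ := {y : ℝ | c < |y|} with hU_def
  have hUmeas : MeasurableSet U := measurableSet_lt measurable_const measurable_abs
  set F : Finset {p : ℕ × ℕ // 1 ≤ p.1 ∧ p.1 ≤ p.2} :=
    (Finset.Icc 1 N ×ˢ Finset.Icc 1 N).subtype (fun q => 1 ≤ q.1 ∧ q.1 ≤ q.2) with hF_def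
  set E : {p : ℕ × ℕ // 1 ≤ p.1 ∧ p.1 ≤ p.2} → Set Ω :=
    fun p => (x p.1.1 p.1.2) ⁻¹' U with hE_def
  set q : ℝ≥0∞ := ENNReal.ofReal (8 * B ^ (-α) / N) with hq_def
  have hFcard : F.card ≤ N ^ 2 := by
    rw [hF_def, Finset.card_subtype]
    calc (Finset.filter _ _).card ≤ (Finset.Icc 1 N ×ˢ Finset.Icc 1 N).card :=
          Finset.card_filter_le _ _
      _ = N ^ 2 := by rw [Finset.card_product, Nat.card_Icc]; simp [sq]
  have hprob : ∀ p ∈ F, ℙ (E p) ≤ q := by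
    intro p hp
    have h1 : ℙ (E p) = (Measure.map (x p.1.1 p.1.2) ℙ) U := by
      rw [Measure.map_apply (hmeas _ _) hUmeas]
    have h2 : (Measure.map (x p.1.1 p.1.2) ℙ) U = (Measure.map v ℙ) U := by
      rw [hident p.1.1 p.1.2 p.2.1 p.2.2]
    have h3 : (Measure.map v ℙ) U = ℙ {ω | c < |v ω|} := by
      rw [Measure.map_apply hv hUmeas]
      rfl
    rw [h1, h2, h3]
    exact hq
  have hind : ∀ T ⊆ F, ℙ (⋂ i ∈ T, E i) = ∏ i ∈ T, ℙ (E i) := by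
    intro T _
    exact hindep.measure_inter_preimage_eq_mul T (fun i _ => hUmeas)
  -- event inclusion
  have hsub : {ω : Ω | ε < d1 (espec ((aN (x 1 1) N)⁻¹ • symMat x ω N))
        (espec (truncMat x (aN (x 1 1) N) (B * aN (x 1 1) N) ω N))}
      ⊆ {ω | m ≤ (F.filter (fun i => ω ∈ E i)).card} := by
    intro ω hω
    simp only [Set.mem_setOf_eq] at hω ⊢
    set A₁ : Matrix (Fin N) (Fin N) ℝ := a⁻¹ • symMat x ω N with hA1_def
    set A₂ : Matrix (Fin N) (Fin N) ℝ := truncMat x a c ω N with hA2_def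
    have hH1 : A₁.IsHermitian := by
      show A₁ᴴ = A₁
      ext i j
      simp only [Matrix.conjTranspose_apply, star_trivial, hA1_def, Matrix.smul_apply,
        symMat, Matrix.of_apply, smul_eq_mul]
      rw [min_comm, max_comm]
    have hH2 : A₂.IsHermitian := by
      show A₂ᴴ = A₂
      ext i j
      simp only [Matrix.conjTranspose_apply, star_trivial, hA2_def, truncMat, Matrix.of_apply]
      rw [min_comm, max_comm]
    set J : Finset (Fin N) := Finset.univ.filter (fun i => ∃ j : Fin N, A₁ i j ≠ A₂ i j)
      with hJ_def
    have hd1 : d1 (espec A₁) (espec A₂) ≤ 2 * J.card / N := by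
      apply d1_espec_le A₁ A₂ hH1 hH2 J
      intro i j hne
      rw [hJ_def, Finset.mem_filter]
      exact ⟨Finset.mem_univ i, ⟨j, hne⟩⟩
    -- each differing entry gives a bad pair
    have key_entry : ∀ i j : Fin N, A₁ i j ≠ A₂ i j →
        c < |x (min (i.1+1) (j.1+1)) (max (i.1+1) (j.1+1)) ω| := by
      intro i j hne
      by_contra hcon
      push_neg at hcon
      apply hne
      simp only [hA1_def, hA2_def, Matrix.smul_apply, symMat, truncMat, Matrix.of_apply,
        smul_eq_mul, if_pos hcon]
    set pr : Fin N → Fin N → {p : ℕ × ℕ // 1 ≤ p.1 ∧ p.1 ≤ p.2} := fun i j =>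
      ⟨(min (i.1+1) (j.1+1), max (i.1+1) (j.1+1)),
        ⟨le_min (Nat.succ_le_succ (Nat.zero_le _)) (Nat.succ_le_succ (Nat.zero_le _)),
          min_le_max⟩⟩ with hpr_def
    have hpr_mem : ∀ i j : Fin N, pr i j ∈ F := by
      intro i j
      rw [hF_def, Finset.mem_subtype]
      simp only [Finset.mem_product, Finset.mem_Icc]
      refine ⟨⟨le_min (Nat.succ_le_succ (Nat.zero_le _)) (Nat.succ_le_succ (Nat.zero_le _)), ?_⟩,
        ⟨le_trans (le_min (Nat.succ_le_succ (Nat.zero_le _)) (Nat.succ_le_succ (Nat.zero_le _))) min_le_max, ?_⟩⟩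
      · exact le_trans (min_le_left _ _) i.2
      · exact max_le i.2 j.2
    set Φ : Fin N → {p : ℕ × ℕ // 1 ≤ p.1 ∧ p.1 ≤ p.2} := fun i =>
      if h : ∃ j : Fin N, A₁ i j ≠ A₂ i j then pr i (Classical.choose h)
      else ⟨(1,1), ⟨le_refl 1, le_refl 1⟩⟩ with hΦ_def
    set T : Finset {p : ℕ × ℕ // 1 ≤ p.1 ∧ p.1 ≤ p.2} :=
      F.filter (fun i => ω ∈ E i) with hT_def
    have hmaps : ∀ i ∈ J, Φ i ∈ T := by
      intro i hi
      have hex : ∃ j : Fin N, A₁ i j ≠ A₂ i j := (Finset.mem_filter.1 hi).2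
      rw [hΦ_def]
      simp only [dif_pos hex]
      rw [hT_def, Finset.mem_filter]
      refine ⟨hpr_mem _ _, ?_⟩
      have := key_entry i (Classical.choose hex) (Classical.choose_spec hex)
      exact this
    have hfiber : ∀ p ∈ T, (J.filter (fun i => Φ i = p)).card ≤ 2 := by
      intro p _
      set g : Fin N → ℕ := fun i => i.1 + 1 with hg_def
      have hginj : Function.Injective g := by
        intro i j h
        simp only [hg_def] at h
        exact Fin.ext (Nat.succ_injective h)
      have hsub2 : (J.filter (fun i => Φ i = p)).image g ⊆ {p.1.1, p.1.2} := by
        intro n hn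
        obtain ⟨i, hi, rfl⟩ := Finset.mem_image.1 hn
        obtain ⟨hiJ, hΦi⟩ := Finset.mem_filter.1 hi
        have hex : ∃ j : Fin N, A₁ i j ≠ A₂ i j := (Finset.mem_filter.1 hiJ).2
        rw [hΦ_def] at hΦi
        simp only [dif_pos hex] at hΦi
        have hfst : p.1.1 = min (i.1+1) ((Classical.choose hex).1+1) := by
          rw [← hΦi]
        have hsnd : p.1.2 = max (i.1+1) ((Classical.choose hex).1+1) := by
          rw [← hΦi]
        simp only [Finset.mem_insert, Finset.mem_singleton, hg_def]
        rcases le_total (i.1+1) ((Classical.choose hex).1+1) with hle | hle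
        · left; rw [hfst, min_eq_left hle]
        · right; rw [hsnd, max_eq_left hle]
      calc (J.filter (fun i => Φ i = p)).card
          = ((J.filter (fun i => Φ i = p)).image g).card :=
            (Finset.card_image_of_injective _ hginj).symm
        _ ≤ ({p.1.1, p.1.2} : Finset ℕ).card := Finset.card_le_card hsub2
        _ ≤ 2 := Finset.card_insert_le _ _ |>.trans (by simp)
    have hJT : J.card ≤ 2 * T.card :=
      Finset.card_le_mul_card_image_of_maps_to hmaps 2 hfiber
    -- conclude
    have hd1' : ε < 2 * (J.card:ℝ) / N := by
      calc ε < d1 (espec A₁) (espec A₂) := hω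
        _ ≤ 2 * J.card / N := hd1
    have hS : ε * N / 4 < (T.card : ℝ) := by
      have hJR : (J.card : ℝ) ≤ 2 * T.card := by exact_mod_cast hJT
      rw [lt_div_iff₀ hNR] at hd1'
      nlinarith
    have : (m:ℝ) ≤ (T.card:ℝ) := by
      have hfl : Nat.floor (ε * N / 4) < T.card := by
        rw [Nat.floor_lt (by positivity)]
        exact hS
      exact_mod_cast hfl
    exact_mod_cast this
  -- apply the union bound and the numeric estimate
  calc ℙ {ω : Ω | ε < d1 (espec ((aN (x 1 1) N)⁻¹ • symMat x ω N))
        (espec (truncMat x (aN (x 1 1) N) (B * aN (x 1 1) N) ω N))}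
      ≤ ℙ {ω | m ≤ (F.filter (fun i => ω ∈ E i)).card} := measure_mono hsub
    _ ≤ (F.card.choose m) * q ^ m := union_indep_bound F E q m hprob hind
    _ ≤ ENNReal.ofReal (Real.exp (-(ε/4) * N)) := by
        have hq8 : (0:ℝ) ≤ 8 * B ^ (-α) / N := by positivity
        rw [hq_def, ← ENNReal.ofReal_pow hq8, ← ENNReal.ofReal_natCast,
          ← ENNReal.ofReal_mul (by positivity)]
        apply ENNReal.ofReal_le_ofReal
        have := numeric_bound hε hBα hBαpos hN1 hFcard hmR
        rwa [Real.rpow_neg hBpos.le] at *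
end
end
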